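/- arXiv:2407.08478 — 4 statements merged into one kernel-verified Lean document; each statement's English description precedes it below -/
import Mathlib

section
/- Under the same assumptions as the previous statement (w a probability vector on [1,N] solving the stationarity equations of Z), for every i ∈ [2, N] one has (λ_i + μ_i + κ) w_i = λ_{i-1} w_{i-1} + μ_{i+1} w_{i+1}, with conventions λ_N = 0 and w_{N+1} = 0. -/
/-!
Write `S i = ∑_{j > i} w_j`. Downward from `i = N` (where `λ_N = 0` and `w_{N+1} = 0`), the
stationarity equations give the flux relation `λ_i w_i = μ_{i+1} w_{i+1} + κ S i`: subtracting
`(i + 1)` times the relation at `i + 1` from the stationarity equation at `i + 1` leaves `i` times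
the relation at `i`. Subtracting the flux relation from the stationarity equation at `i` leaves
`i - 1` times the claimed recurrence, and `i - 1 ≠ 0` for `i ≥ 2`.
-/

open Finset

lemma sum_Icc_eq_add_sum_Icc_succ (w : ℕ → ℝ) {i N : ℕ} (h : i ≤ N) :
    ∑ j ∈ Icc i N, w j = w i + ∑ j ∈ Icc (i + 1) N, w j := by
  rw [← add_sum_Ioc_eq_sum_Icc h, Icc_add_one_left_eq_Ioc]

section Flux

variable {N : ℕ} {lam mu : ℕ → ℝ} {kappa : ℝ} {w : ℕ → ℝ}

lemma flux_of_flux_succ {i : ℕ} (hi : i ≠ 0) (hiN : i + 1 ≤ N)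
    (hstat : ((i : ℝ) * (mu (i + 1) + kappa) + (i + 1 : ℝ) * lam (i + 1)) * w (i + 1)
      = (i : ℝ) * lam i * w i + (i + 1 : ℝ) * mu (i + 2) * w (i + 2)
        + kappa * ∑ j ∈ Icc (i + 2) N, w j)
    (hflux : lam (i + 1) * w (i + 1) = mu (i + 2) * w (i + 2) + kappa * ∑ j ∈ Icc (i + 2) N, w j) :
    lam i * w i = mu (i + 1) * w (i + 1) + kappa * ∑ j ∈ Icc (i + 1) N, w j := by
  rw [sum_Icc_eq_add_sum_Icc_succ w hiN]
  apply mul_left_cancel₀ (Nat.cast_ne_zero.mpr hi : (i : ℝ) ≠ 0)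
  linear_combination (i + 1 : ℝ) * hflux - hstat

lemma flux_of_stationary (hlamN : lam N = 0) (hwN1 : w (N + 1) = 0)
    (hstat : ∀ i, 1 ≤ i → i ≤ N →
      (((i : ℝ) - 1) * (mu i + kappa) + (i : ℝ) * lam i) * w i
        = ((i : ℝ) - 1) * lam (i - 1) * w (i - 1) + (i : ℝ) * mu (i + 1) * w (i + 1)
          + kappa * ∑ j ∈ Icc (i + 1) N, w j)
    {i : ℕ} (hi : 1 ≤ i) (hiN : i ≤ N) :
    lam i * w i = mu (i + 1) * w (i + 1) + kappa * ∑ j ∈ Icc (i + 1) N, w j := by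
  induction hiN using Nat.decreasingInduction with
  | self => simp [hlamN, hwN1]
  | of_succ k hkN ih =>
    have hstat_succ := hstat (k + 1) (by omega) hkN
    simp only [Nat.add_sub_cancel, Nat.cast_add, Nat.cast_one, add_sub_cancel_right] at hstat_succ
    exact flux_of_flux_succ (by omega) hkN hstat_succ (ih (by omega))

end Flux

theorem stmt3_general (N : ℕ) (lam mu : ℕ → ℝ) (kappa : ℝ)
    (hlamN : lam N = 0)
    (w : ℕ → ℝ)
    (hwN1 : w (N + 1) = 0)
    (hstat : ∀ i, 1 ≤ i → i ≤ N →
      (((i : ℝ) - 1) * (mu i + kappa) + (i : ℝ) * lam i) * w i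
        = ((i : ℝ) - 1) * lam (i - 1) * w (i - 1) + (i : ℝ) * mu (i + 1) * w (i + 1)
          + kappa * ∑ j ∈ Finset.Icc (i + 1) N, w j) :
    ∀ i, 2 ≤ i → i ≤ N →
      (lam i + mu i + kappa) * w i = lam (i - 1) * w (i - 1) + mu (i + 1) * w (i + 1) := by
  intro i hi hiN
  have hflux := flux_of_stationary hlamN hwN1 hstat (by omega) hiN
  have hi_sub_one : (i : ℝ) - 1 ≠ 0 := by
    have : (2 : ℝ) ≤ i := by exact_mod_cast hi
    linarith
  apply mul_left_cancel₀ hi_sub_one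
  linear_combination hstat i (by omega) hiN - hflux

theorem stmt3 (N : ℕ) (hN : 0 < N) (lam mu : ℕ → ℝ) (kappa : ℝ)
    (hlam : ∀ i, 1 ≤ i → i ≤ N - 1 → 0 < lam i)
    (hmu : ∀ i, 1 ≤ i → i ≤ N → 0 ≤ mu i)
    (hkappa : 0 < kappa)
    (hlamN : lam N = 0)
    (w : ℕ → ℝ)
    (hw0 : w 0 = 0) (hwN1 : w (N + 1) = 0)
    (hwnn : ∀ i, 1 ≤ i → i ≤ N → 0 ≤ w i)
    (hwsum : ∑ i ∈ Finset.Icc 1 N, w i = 1)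
    (hstat : ∀ i, 1 ≤ i → i ≤ N →
      (((i : ℝ) - 1) * (mu i + kappa) + (i : ℝ) * lam i) * w i
        = ((i : ℝ) - 1) * lam (i - 1) * w (i - 1) + (i : ℝ) * mu (i + 1) * w (i + 1)
          + kappa * ∑ j ∈ Finset.Icc (i + 1) N, w j) :
    ∀ i, 2 ≤ i → i ≤ N →
      (lam i + mu i + kappa) * w i = lam (i - 1) * w (i - 1) + mu (i + 1) * w (i + 1) :=
  stmt3_general N lam mu kappa hlamN w hwN1 hstat
end

section
/- Let N be a positive integer, 1 ≤ n ≤ N−1, and let w = (w_i)_{i=1}^{N} be the probability vector solving the stationarity equations of the catastrophe process Z (as above), with ∑_{j=n}^{N} w_j > 0. Define w^{(n)}_i := w_i / ∑_{j=n}^{N} w_j for i ∈ [n, N]. Then w^{(n)} is a stationary distribution of the restricted process Z^{(n)} on [n, N], i.e. it satisfies λ_n w^{(n)}_n = μ_{n+1} w^{(n)}_{n+1} + κ ∑_{j=n+1}^{N} w^{(n)}_j and (λ_i + μ_i + κ) w^{(n)}_i = λ_{i-1} w^{(n)}_{i-1} + μ_{i+1} w^{(n)}_{i+1} for all i ∈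 [n+1, N]. -/
/-!
Let `T i = ∑_{j ≥ i} w j` and let `F i = λ_i w_i - μ_{i+1} w_{i+1} - κ T(i+1)` (`flux`) be the net flux of
`w` across the edge `i → i+1`, catastrophes from above `i` counted as crossing it downwards.
Using `T i = w i + T (i+1)`, the stationarity equation of `Z` at `i` reads `i F i = (i - 1) F (i - 1)`,
so `F i = 0` for every `i ∈ [1, N]`. The boundary equation of `Z⁽ⁿ⁾` is `F n = 0`, and its interior
equation at `i` is `F i - F (i - 1) = 0`. Both are linear in `w`, so they survive normalisation.
-/

open Finset

namespace CatastropheProcess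

variable (N : ℕ) (lam mu : ℕ → ℝ) (kappa : ℝ)

def IsStationary (w : ℕ → ℝ) : Prop :=
  ∀ i, 1 ≤ i → i ≤ N →
    (((i : ℝ) - 1) * (mu i + kappa) + (i : ℝ) * lam i) * w i
      = ((i : ℝ) - 1) * lam (i - 1) * w (i - 1) + (i : ℝ) * mu (i + 1) * w (i + 1)
        + kappa * ∑ j ∈ Icc (i + 1) N, w j

def IsRestrictedStationary (n : ℕ) (v : ℕ → ℝ) : Prop :=
  lam n * v n = mu (n + 1) * v (n + 1) + kappa * ∑ j ∈ Icc (n + 1) N, v j ∧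
  ∀ i, n + 1 ≤ i → i ≤ N →
    (lam i + mu i + kappa) * v i = lam (i - 1) * v (i - 1) + mu (i + 1) * v (i + 1)

def flux (w : ℕ → ℝ) (i : ℕ) : ℝ :=
  lam i * w i - mu (i + 1) * w (i + 1) - kappa * ∑ j ∈ Icc (i + 1) N, w j

variable {N lam mu kappa}

theorem IsRestrictedStationary.const_mul {n : ℕ} {v : ℕ → ℝ}
    (h : IsRestrictedStationary N lam mu kappa n v) (c : ℝ) :
    IsRestrictedStationary N lam mu kappa n (fun i => c * v i) := by
  obtain ⟨hbdry, hint⟩ := h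
  refine ⟨?_, fun i hi hiN => ?_⟩
  · rw [← mul_sum]
    linear_combination c * hbdry
  · linear_combination c * hint i hi hiN

theorem sum_Icc_eq_add_sum_Icc_succ (w : ℕ → ℝ) {i : ℕ} (hiN : i ≤ N) :
    ∑ j ∈ Icc i N, w j = w i + ∑ j ∈ Icc (i + 1) N, w j := by
  rw [Icc_eq_cons_Ioc hiN, sum_cons, Icc_add_one_left_eq_Ioc]

namespace IsStationary

variable {w : ℕ → ℝ} (hw : IsStationary N lam mu kappa w)
include hw

theorem succ_mul_flux {k : ℕ} (hk : k + 1 ≤ N) :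
    ((k : ℝ) + 1) * flux N lam mu kappa w (k + 1) = k * flux N lam mu kappa w k := by
  have h := hw (k + 1) (by omega) hk
  simp only [Nat.cast_add, Nat.cast_one, add_sub_cancel_right, Nat.add_sub_cancel] at h
  unfold flux
  rw [sum_Icc_eq_add_sum_Icc_succ w hk]
  linear_combination h

theorem flux_eq_zero {i : ℕ} (hi : 1 ≤ i) (hiN : i ≤ N) : flux N lam mu kappa w i = 0 := by
  have hmul : ∀ i ≤ N, (i : ℝ) * flux N lam mu kappa w i = 0 := by
    intro i hiN
    induction i with
    | zero => simp
    | succ k ih =>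
      push_cast
      rw [hw.succ_mul_flux hiN, ih (by omega)]
  exact (mul_eq_zero.mp (hmul i hiN)).resolve_left (by positivity)

theorem isRestrictedStationary {n : ℕ} (hn : 1 ≤ n) (hnN : n ≤ N) :
    IsRestrictedStationary N lam mu kappa n w := by
  refine ⟨?_, fun i hi hiN => ?_⟩
  · have hflux := hw.flux_eq_zero hn hnN
    unfold flux at hflux
    linear_combination hflux
  · obtain ⟨k, rfl⟩ : ∃ k, i = k + 1 := ⟨i - 1, by omega⟩
    have hk := hw.flux_eq_zero (i := k) (by omega) (by omega)
    have hk1 := hw.flux_eq_zero (by omega) hiN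
    unfold flux at hk hk1
    rw [sum_Icc_eq_add_sum_Icc_succ w hiN] at hk
    simp only [Nat.add_sub_cancel]
    linear_combination hk1 - hk

end IsStationary

end CatastropheProcess

open CatastropheProcess in
theorem stmt4_general (N : ℕ) (lam mu : ℕ → ℝ) (kappa : ℝ)
    (w : ℕ → ℝ)
    (hstat : ∀ i, 1 ≤ i → i ≤ N →
      (((i : ℝ) - 1) * (mu i + kappa) + (i : ℝ) * lam i) * w i
        = ((i : ℝ) - 1) * lam (i - 1) * w (i - 1) + (i : ℝ) * mu (i + 1) * w (i + 1)
          + kappa * ∑ j ∈ Finset.Icc (i + 1) N, w j)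
    (n : ℕ) (hn1 : 1 ≤ n) (hnN : n ≤ N - 1)
    (w' : ℕ → ℝ)
    (hw' : ∀ i, w' i = w i / ∑ j ∈ Finset.Icc n N, w j) :
    lam n * w' n = mu (n + 1) * w' (n + 1) + kappa * ∑ j ∈ Finset.Icc (n + 1) N, w' j ∧
    ∀ i, n + 1 ≤ i → i ≤ N →
      (lam i + mu i + kappa) * w' i = lam (i - 1) * w' (i - 1) + mu (i + 1) * w' (i + 1) := by
  have hw'_eq : w' = fun i => (∑ j ∈ Finset.Icc n N, w j)⁻¹ * w i :=
    funext fun i => (hw' i).trans (div_eq_inv_mul _ _)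
  subst hw'_eq
  have hw : IsStationary N lam mu kappa w := hstat
  exact (hw.isRestrictedStationary hn1 (by omega)).const_mul _

theorem stmt4 (N : ℕ) (hN : 0 < N) (lam mu : ℕ → ℝ) (kappa : ℝ)
    (hlam : ∀ i, 1 ≤ i → i ≤ N - 1 → 0 < lam i)
    (hmu : ∀ i, 1 ≤ i → i ≤ N → 0 ≤ mu i)
    (hkappa : 0 < kappa)
    (hlamN : lam N = 0)
    (w : ℕ → ℝ)
    (hw0 : w 0 = 0) (hwN1 : w (N + 1) = 0)
    (hwnn : ∀ i, 1 ≤ i → i ≤ N → 0 ≤ w i)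
    (hwsum : ∑ i ∈ Finset.Icc 1 N, w i = 1)
    (hstat : ∀ i, 1 ≤ i → i ≤ N →
      (((i : ℝ) - 1) * (mu i + kappa) + (i : ℝ) * lam i) * w i
        = ((i : ℝ) - 1) * lam (i - 1) * w (i - 1) + (i : ℝ) * mu (i + 1) * w (i + 1)
          + kappa * ∑ j ∈ Finset.Icc (i + 1) N, w j)
    (n : ℕ) (hn1 : 1 ≤ n) (hnN : n ≤ N - 1)
    (hS : 0 < ∑ j ∈ Finset.Icc n N, w j)
    (w' : ℕ → ℝ)
    (hw' : ∀ i, w' i = w i / ∑ j ∈ Finset.Icc n N, w j) :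
    lam n * w' n = mu (n + 1) * w' (n + 1) + kappa * ∑ j ∈ Finset.Icc (n + 1) N, w' j ∧
    ∀ i, n + 1 ≤ i → i ≤ N →
      (lam i + mu i + kappa) * w' i = lam (i - 1) * w' (i - 1) + mu (i + 1) * w' (i + 1) :=
  stmt4_general N lam mu kappa w hstat n hn1 hnN w' hw'
end

section
/- Fix σ > 0, θ > 0, ν_1 ∈ (0,1). Let (β_i)_{i≥0} satisfy β_0 = 1, lim_{i→∞} β_i = 0, and the recursion (i − 1 + σ + θ) β_i = σ β_{i+1} + (i − 1 + θν_1) β_{i-1} for i ≥ 1, with β_1 > β_2 > 0. Define α_i := [(β_{i+1} − β_{i+2})/(β_1 − β_2)] · σ^i / ∏_{j=1}^{i}(j + θν_1) for i ≥ 0. Then α_0 = 1 and (α_i) satisfies Fearnhead's recursion (i + 1 + σ + θ) α_i = σ α_{i-1} + (i + 1 + θν_1) α_{i+1} for all i ≥ 1. -/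
/-! Subtracting consecutive instances of the recursion for `β` shows that the differences
`β i - β (i + 1)` satisfy the same three-term recursion, shifted by one in the linear
coefficient. The weights `σ ^ i / ∏ j ∈ Icc 1 i, (j + θ ν₁)` then turn it into Fearnhead's
recursion, since consecutive weights differ by the factor `σ / (i + 1 + θ ν₁)`. -/

open Finset Filter

lemma sub_succ_recurrence (σ θ a : ℝ) (β : ℕ → ℝ)
    (hβ : ∀ n : ℕ, ((n : ℝ) + σ + θ) * β (n + 1) = σ * β (n + 2) + ((n : ℝ) + a) * β n)
    (n : ℕ) :
    ((n : ℝ) + 1 + σ + θ) * (β (n + 1) - β (n + 2))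
      = σ * (β (n + 2) - β (n + 3)) + ((n : ℝ) + a) * (β n - β (n + 1)) := by
  have h₁ : ((n : ℝ) + 1 + σ + θ) * β (n + 2) = σ * β (n + 3) + ((n : ℝ) + 1 + a) * β (n + 1) := by
    exact_mod_cast hβ (n + 1)
  linear_combination hβ n - h₁

lemma pow_div_prod_Icc_succ (σ a : ℝ) (n : ℕ) (h : (n : ℝ) + 1 + a ≠ 0) :
    σ ^ (n + 1) / (∏ j ∈ Icc 1 (n + 1), ((j : ℝ) + a)) * ((n : ℝ) + 1 + a)
      = σ * (σ ^ n / ∏ j ∈ Icc 1 n, ((j : ℝ) + a)) := by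
  rw [prod_Icc_succ_top (by omega), pow_succ]
  push_cast
  field_simp

lemma fearnhead_recurrence_of_weighted (σ θ a c : ℝ) (d w α : ℕ → ℝ)
    (hd : ∀ n : ℕ, ((n : ℝ) + 1 + σ + θ) * d (n + 1) = σ * d (n + 2) + ((n : ℝ) + a) * d n)
    (hw : ∀ n : ℕ, w (n + 1) * ((n : ℝ) + 1 + a) = σ * w n)
    (hα : ∀ n : ℕ, α n = c * d (n + 1) * w n) (n : ℕ) :
    ((n : ℝ) + 2 + σ + θ) * α (n + 1) = σ * α n + ((n : ℝ) + 2 + a) * α (n + 2) := by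
  have hd₁ : ((n : ℝ) + 2 + σ + θ) * d (n + 2) = σ * d (n + 3) + ((n : ℝ) + 1 + a) * d (n + 1) := by
    convert hd (n + 1) using 2 <;> push_cast <;> ring
  have hw₁ : w (n + 2) * ((n : ℝ) + 2 + a) = σ * w (n + 1) := by
    convert hw (n + 1) using 2; push_cast; ring
  rw [hα, hα, hα]
  linear_combination (c * w (n + 1)) * hd₁ + (c * d (n + 1)) * hw n - (c * d (n + 3)) * hw₁

theorem stmt13_general (σ θ ν1 : ℝ) (hθ : 0 < θ) (hν : ν1 ∈ Set.Ioo (0:ℝ) 1)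
    (β α : ℕ → ℝ)
    (hβrec : ∀ i : ℕ, 1 ≤ i →
      ((i : ℝ) - 1 + σ + θ) * β i = σ * β (i + 1) + ((i : ℝ) - 1 + θ * ν1) * β (i - 1))
    (hβ12 : β 2 < β 1)
    (hα : ∀ i : ℕ,
      α i = (β (i + 1) - β (i + 2)) / (β 1 - β 2) * σ ^ i
              / ∏ j ∈ Finset.Icc 1 i, ((j : ℝ) + θ * ν1)) :
    α 0 = 1 ∧
    ∀ i : ℕ, 1 ≤ i →
      ((i : ℝ) + 1 + σ + θ) * α i = σ * α (i - 1) + ((i : ℝ) + 1 + θ * ν1) * α (i + 1) := by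
  have hθν : 0 ≤ θ * ν1 := (mul_pos hθ hν.1).le
  have hβ : ∀ n : ℕ, ((n : ℝ) + σ + θ) * β (n + 1) = σ * β (n + 2) + ((n : ℝ) + θ * ν1) * β n := by
    intro n
    simpa using hβrec (n + 1) le_add_self
  refine ⟨by simp [hα, div_self (sub_ne_zero.mpr hβ12.ne')], fun i hi => ?_⟩
  obtain ⟨n, rfl⟩ : ∃ n, i = n + 1 := ⟨i - 1, by omega⟩
  have key := fearnhead_recurrence_of_weighted σ θ (θ * ν1) (β 1 - β 2)⁻¹
    (fun n => β n - β (n + 1)) (fun n => σ ^ n / ∏ j ∈ Icc 1 n, ((j : ℝ) + θ * ν1)) α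
    (sub_succ_recurrence σ θ (θ * ν1) β hβ)
    (fun n => pow_div_prod_Icc_succ σ _ n (by positivity))
    (fun n => by rw [hα]; ring) n
  push_cast
  linear_combination key

theorem stmt13 (σ θ ν1 : ℝ) (hσ : 0 < σ) (hθ : 0 < θ) (hν : ν1 ∈ Set.Ioo (0:ℝ) 1)
    (β α : ℕ → ℝ)
    (hβ0 : β 0 = 1) (hβlim : Tendsto β atTop (nhds 0))
    (hβrec : ∀ i : ℕ, 1 ≤ i →
      ((i : ℝ) - 1 + σ + θ) * β i = σ * β (i + 1) + ((i : ℝ) - 1 + θ * ν1) * β (i - 1))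
    (hβ12 : β 2 < β 1) (hβ2 : 0 < β 2)
    (hα : ∀ i : ℕ,
      α i = (β (i + 1) - β (i + 2)) / (β 1 - β 2) * σ ^ i
              / ∏ j ∈ Finset.Icc 1 i, ((j : ℝ) + θ * ν1)) :
    α 0 = 1 ∧
    ∀ i : ℕ, 1 ≤ i →
      ((i : ℝ) + 1 + σ + θ) * α i = σ * α (i - 1) + ((i : ℝ) + 1 + θ * ν1) * α (i + 1) :=
  stmt13_general σ θ ν1 hθ hν β α hβrec hβ12 hα
end

section
/- Fix σ > 0, θ > 0, ν_1 ∈ (0,1). Let π(y) := C^{-1} e^{-σy} y^{θν_1 − 1} (1−y)^{θν_0 − 1} on (0,1), with ν_0 = 1 − ν_1 and C the normalizing constant, and define β_i := ∫_0^1 y^i π(y) dy for i ≥ 0 (moments of Wright's distribution). Then (β_i) satisfies the recursion (i − 1 + σ + θ) β_i = σ β_{i+1} + (i − 1 + θν_1) β_{i-1} for all i ≥ 1, together with β_0 = 1 and lim_{i→∞} β_i = 0. -/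
/-!
With `w(y) = e^{-σy} y^{a-1} (1-y)^{b-1}`, `a = θν₁`, `b = θν₀`, the boundary term
`e^{-σy} y^{m+a} (1-y)^b` (`m ≥ 0`) vanishes at both ends of `[0,1]` and has derivative
`((m+a) y^m - (m+a+b+σ) y^{m+1} + σ y^{m+2}) w(y)`. Integrating it gives a three-term relation
between consecutive moments of `w`, which is the recursion for `m = i - 1`, since `a + b = θ`.
The moments tend to `0` by dominated convergence, since `y^k → 0` on `[0,1)`.
-/

open Filter MeasureTheory Set

noncomputable def wrightWeight (σ a b y : ℝ) : ℝ :=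
  Real.exp (-σ * y) * y ^ (a - 1) * (1 - y) ^ (b - 1)

noncomputable def wrightMoment (σ a b : ℝ) (k : ℕ) : ℝ :=
  ∫ y in (0:ℝ)..1, y ^ k * wrightWeight σ a b y

lemma intervalIntegrable_rpow_mul_one_sub_rpow {a b : ℝ} (ha : 0 < a) (hb : 0 < b) :
    IntervalIntegrable (fun y : ℝ => y ^ (a - 1) * (1 - y) ^ (b - 1)) volume 0 1 := by
  have h := Complex.betaIntegral_convergent (u := (a : ℂ)) (v := (b : ℂ))
    (by simpa using ha) (by simpa using hb)
  rw [intervalIntegrable_iff_integrableOn_Ioc_of_le zero_le_one] at h ⊢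
  refine IntegrableOn.congr_fun h.re (fun y hy => ?_) measurableSet_Ioc
  have hy1 : (0:ℝ) ≤ 1 - y := by linarith [hy.2]
  rw [show (a : ℂ) - 1 = ((a - 1 : ℝ) : ℂ) by push_cast; ring,
    show (b : ℂ) - 1 = ((b - 1 : ℝ) : ℂ) by push_cast; ring,
    show 1 - (y : ℂ) = ((1 - y : ℝ) : ℂ) by push_cast; ring,
    ← Complex.ofReal_cpow hy.1.le, ← Complex.ofReal_cpow hy1, ← Complex.ofReal_mul]
  exact Complex.ofReal_re _

lemma tendsto_integral_pow_mul_zero {f : ℝ → ℝ} (hf : IntervalIntegrable f volume 0 1) :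
    Tendsto (fun k : ℕ => ∫ y in (0:ℝ)..1, y ^ k * f y) atTop (nhds 0) := by
  simp only [intervalIntegral.integral_of_le zero_le_one]
  have hlim := tendsto_integral_of_dominated_convergence (f := fun _ => 0) (fun y => ‖f y‖)
    (fun k => (hf.continuousOn_mul (continuous_pow k).continuousOn).1.aestronglyMeasurable)
    hf.1.norm (fun k => ?_) ?_
  · rwa [integral_zero] at hlim
  · filter_upwards [ae_restrict_mem measurableSet_Ioc] with y hy
    rw [norm_mul, norm_pow, Real.norm_of_nonneg hy.1.le]
    exact mul_le_of_le_one_left (norm_nonneg _) (pow_le_one₀ hy.1.le hy.2)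
  · filter_upwards [ae_restrict_mem measurableSet_Ioc, Measure.ae_ne _ 1] with y hy hy1
    simpa using (tendsto_pow_atTop_nhds_zero_of_lt_one hy.1.le
      (lt_of_le_of_ne hy.2 hy1)).mul_const (f y)

section

open Real

variable (σ : ℝ) {a b : ℝ}

lemma intervalIntegrable_wrightWeight (ha : 0 < a) (hb : 0 < b) :
    IntervalIntegrable (wrightWeight σ a b) volume 0 1 := by
  refine ((intervalIntegrable_rpow_mul_one_sub_rpow ha hb).continuousOn_mul
    (g := fun y => exp (-σ * y)) (by fun_prop)).congr fun y _ => ?_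
  simp only [wrightWeight, mul_assoc]

lemma intervalIntegrable_pow_mul_wrightWeight (ha : 0 < a) (hb : 0 < b) (k : ℕ) :
    IntervalIntegrable (fun y => y ^ k * wrightWeight σ a b y) volume 0 1 :=
  (intervalIntegrable_wrightWeight σ ha hb).continuousOn_mul (continuous_pow k).continuousOn

lemma wrightWeight_pos {y : ℝ} (hy : y ∈ Ioo (0:ℝ) 1) : 0 < wrightWeight σ a b y :=
  mul_pos (mul_pos (exp_pos _) (rpow_pos_of_pos hy.1 _)) (rpow_pos_of_pos (sub_pos.2 hy.2) _)

lemma wrightMoment_zero_pos (ha : 0 < a) (hb : 0 < b) : 0 < wrightMoment σ a b 0 := by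
  simp only [wrightMoment, pow_zero, one_mul]
  exact intervalIntegral.intervalIntegral_pos_of_pos_on (intervalIntegrable_wrightWeight σ ha hb)
    (fun y hy => wrightWeight_pos σ hy) one_pos

lemma hasDerivAt_wrightBoundary (m : ℕ) {y : ℝ} (hy : y ∈ Ioo (0:ℝ) 1) :
    HasDerivAt (fun y => exp (-σ * y) * y ^ (m + a) * (1 - y) ^ b)
      (((m + a) * y ^ m - (m + a + b + σ) * y ^ (m + 1) + σ * y ^ (m + 2)) *
        wrightWeight σ a b y) y := by
  have hy0 : 0 < y := hy.1
  have hy1 : 0 < 1 - y := sub_pos.2 hy.2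
  have hexp : HasDerivAt (fun y => exp (-σ * y)) (exp (-σ * y) * (-σ)) y := by
    simpa using ((hasDerivAt_id y).const_mul (-σ)).exp
  have hpow : HasDerivAt (fun y => y ^ (m + a)) ((m + a) * y ^ (m + a - 1)) y :=
    hasDerivAt_rpow_const (Or.inl hy0.ne')
  have hsub : HasDerivAt (fun y => (1 - y) ^ b) (-1 * b * (1 - y) ^ (b - 1)) y := by
    simpa using ((hasDerivAt_id y).const_sub 1).rpow_const (p := b) (Or.inl hy1.ne')
  refine ((hexp.mul hpow).mul hsub).congr_deriv ?_
  simp only [Pi.mul_apply]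
  have hy_ma : y ^ (m + a) = y ^ (m + 1) * y ^ (a - 1) := by
    rw [← rpow_natCast, ← rpow_add hy0]; push_cast; ring_nf
  have hy_ma1 : y ^ (m + a - 1) = y ^ m * y ^ (a - 1) := by
    rw [← rpow_natCast, ← rpow_add hy0]; ring_nf
  have h1y_b : (1 - y) ^ b = (1 - y) * (1 - y) ^ (b - 1) := by
    conv_lhs => rw [← sub_add_cancel b 1, rpow_add hy1, rpow_one]
    ring
  rw [wrightWeight, hy_ma, hy_ma1, h1y_b]
  ring

lemma wrightMoment_recurrence (ha : 0 < a) (hb : 0 < b) (m : ℕ) :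
    (m + a) * wrightMoment σ a b m - (m + a + b + σ) * wrightMoment σ a b (m + 1)
      + σ * wrightMoment σ a b (m + 2) = 0 := by
  have hma : 0 < (m : ℝ) + a := by positivity
  have hint := intervalIntegrable_pow_mul_wrightWeight σ ha hb
  have hcont : ContinuousOn (fun y => exp (-σ * y) * y ^ (m + a) * (1 - y) ^ b) (Icc 0 1) :=
    (((continuous_const.mul continuous_id).rexp.mul (continuous_rpow_const hma.le)).mul
      ((continuous_rpow_const hb.le).comp (continuous_const.sub continuous_id))).continuousOn
  have hftc := intervalIntegral.integral_eq_sub_of_hasDeriv_right_of_le zero_le_one hcont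
    (fun y hy => (hasDerivAt_wrightBoundary σ m hy).hasDerivWithinAt)
    ((intervalIntegrable_wrightWeight σ ha hb).continuousOn_mul (by fun_prop))
  simp only [sub_self, zero_rpow hma.ne', zero_rpow hb.ne', mul_zero, zero_mul, sub_zero] at hftc
  rw [← hftc, wrightMoment, wrightMoment, wrightMoment, ← intervalIntegral.integral_const_mul,
    ← intervalIntegral.integral_const_mul, ← intervalIntegral.integral_const_mul,
    ← intervalIntegral.integral_sub ((hint _).const_mul _) ((hint _).const_mul _),
    ← intervalIntegral.integral_add (((hint _).const_mul _).sub ((hint _).const_mul _))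
      ((hint _).const_mul _)]
  congr 1 with y
  ring

end

theorem stmt14_general (σ θ ν1 ν0 : ℝ) (hθ : 0 < θ) (hν : ν1 ∈ Set.Ioo (0:ℝ) 1)
    (hν0 : ν0 = 1 - ν1)
    (C : ℝ)
    (hC : C = ∫ y in (0:ℝ)..1,
      Real.exp (-σ * y) * y ^ (θ * ν1 - 1) * (1 - y) ^ (θ * ν0 - 1))
    (π : ℝ → ℝ)
    (hπ : ∀ y : ℝ, π y = C⁻¹ *
      (Real.exp (-σ * y) * y ^ (θ * ν1 - 1) * (1 - y) ^ (θ * ν0 - 1)))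
    (β : ℕ → ℝ)
    (hβ : ∀ i : ℕ, β i = ∫ y in (0:ℝ)..1, y ^ i * π y) :
    β 0 = 1 ∧ Tendsto β atTop (nhds 0) ∧
    ∀ i : ℕ, 1 ≤ i →
      ((i : ℝ) - 1 + σ + θ) * β i = σ * β (i + 1) + ((i : ℝ) - 1 + θ * ν1) * β (i - 1) := by
  have ha : 0 < θ * ν1 := mul_pos hθ hν.1
  have hb : 0 < θ * ν0 := hν0 ▸ mul_pos hθ (sub_pos.2 hν.2)
  have hCM : C = wrightMoment σ (θ * ν1) (θ * ν0) 0 := by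
    simp only [hC, wrightMoment, wrightWeight, pow_zero, one_mul]
  have hβM : ∀ k, β k = C⁻¹ * wrightMoment σ (θ * ν1) (θ * ν0) k := fun k => by
    rw [hβ, wrightMoment, ← intervalIntegral.integral_const_mul]
    congr 1 with y
    rw [hπ, wrightWeight]
    ring
  refine ⟨?_, ?_, fun i hi => ?_⟩
  · rw [hβM, ← hCM, inv_mul_cancel₀ (hCM ▸ wrightMoment_zero_pos σ ha hb).ne']
  · simpa [funext hβM, wrightMoment] using
      (tendsto_integral_pow_mul_zero (intervalIntegrable_wrightWeight σ ha hb)).const_mul C⁻¹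
  · obtain ⟨j, rfl⟩ := Nat.exists_eq_add_of_le' hi
    rw [hβM, hβM, hβM, Nat.add_sub_cancel]
    push_cast
    linear_combination (-C⁻¹) * wrightMoment_recurrence σ ha hb j
      - C⁻¹ * θ * wrightMoment σ (θ * ν1) (θ * ν0) (j + 1) * hν0

theorem stmt14 (σ θ ν1 ν0 : ℝ) (hσ : 0 < σ) (hθ : 0 < θ) (hν : ν1 ∈ Set.Ioo (0:ℝ) 1)
    (hν0 : ν0 = 1 - ν1)
    (C : ℝ)
    (hC : C = ∫ y in (0:ℝ)..1,
      Real.exp (-σ * y) * y ^ (θ * ν1 - 1) * (1 - y) ^ (θ * ν0 - 1))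
    (π : ℝ → ℝ)
    (hπ : ∀ y : ℝ, π y = C⁻¹ *
      (Real.exp (-σ * y) * y ^ (θ * ν1 - 1) * (1 - y) ^ (θ * ν0 - 1)))
    (β : ℕ → ℝ)
    (hβ : ∀ i : ℕ, β i = ∫ y in (0:ℝ)..1, y ^ i * π y) :
    β 0 = 1 ∧ Tendsto β atTop (nhds 0) ∧
    ∀ i : ℕ, 1 ≤ i →
      ((i : ℝ) - 1 + σ + θ) * β i = σ * β (i + 1) + ((i : ℝ) - 1 + θ * ν1) * β (i - 1) :=
  stmt14_general σ θ ν1 ν0 hθ hν hν0 C hC π hπ β hβ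
end
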